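/- Fix k ≥ 1 and n ≥ 1. Let T := {(a,b) : a ∈ {1,2}, b ∈ {0,1,…,k}} and let F : T → [n] be a map; define the multiset of directed edges of F as the 2k pairs (F(a,b), F(a,b+1)) for a ∈ {1,2} and 0 ≤ b < k. Suppose every element of [n]×[n] that occurs among these edges occurs at least twice (counted with multiplicity). Then the image V_F := F(T) satisfies |V_F| ≤ k+1, and equality |V_F| = k+1 holds only if the two walks coincide, i.e., F(1,b) = F(2,b) for all 0 ≤ b ≤ k, and the k+1 values F(1,0), F(1,1), …, F(1,k) are pairwise distinct. -/
import Mathlib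

open scoped BigOperators

namespace Stmt10

variable {k n : ℕ}

/-- linear position index -/
def ord (k : ℕ) (p : Fin 2 × Fin (k+1)) : ℕ := p.1.val * (k+1) + p.2.val

/-- target position of a slot -/
def pos (s : Fin 2 × Fin k) : Fin 2 × Fin (k+1) := (s.1, s.2.succ)

/-- source position of a slot -/
def spos (s : Fin 2 × Fin k) : Fin 2 × Fin (k+1) := (s.1, s.2.castSucc)

variable (F : Fin 2 × Fin (k+1) → Fin n)

def edge (s : Fin 2 × Fin k) : Fin n × Fin n := (F (spos s), F (pos s))

def FirstPos : Finset (Fin 2 × Fin (k+1)) :=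
  Finset.univ.filter (fun p => ∀ q, ord k q < ord k p → F q ≠ F p)

def Fr : Finset (Fin 2 × Fin k) := Finset.univ.filter (fun s => pos s ∈ FirstPos F)

lemma ord_inj {p q : Fin 2 × Fin (k+1)} (h : ord k p = ord k q) : p = q := by
  obtain ⟨⟨a, ha⟩, ⟨b, hb⟩⟩ := p
  obtain ⟨⟨c, hc⟩, ⟨d, hd⟩⟩ := q
  simp only [ord] at h
  have : a = c ∧ b = d := by
    interval_cases a <;> interval_cases c <;> omega
  simp [Prod.ext_iff, Fin.ext_iff, this.1, this.2]

lemma pos_inj {s t : Fin 2 × Fin k} (h : pos s = pos t) : s = t := by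
  obtain ⟨a, b⟩ := s; obtain ⟨c, d⟩ := t
  simp only [pos, Prod.ext_iff] at h ⊢
  exact ⟨h.1, Fin.succ_injective _ h.2⟩

lemma spos_inj {s t : Fin 2 × Fin k} (h : spos s = spos t) : s = t := by
  obtain ⟨a, b⟩ := s; obtain ⟨c, d⟩ := t
  simp only [spos, Prod.ext_iff] at h ⊢
  exact ⟨h.1, Fin.castSucc_injective _ h.2⟩

lemma mem_FirstPos {p : Fin 2 × Fin (k+1)} :
    p ∈ FirstPos F ↔ ∀ q, ord k q < ord k p → F q ≠ F p := by
  simp [FirstPos]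

lemma firstPos_unique {p q : Fin 2 × Fin (k+1)} (hp : p ∈ FirstPos F)
    (hq : q ∈ FirstPos F) (h : F p = F q) : p = q := by
  rcases Nat.lt_trichotomy (ord k p) (ord k q) with hlt | heq | hgt
  · exact absurd h ((mem_FirstPos F).1 hq p hlt)
  · exact ord_inj heq
  · exact absurd h.symm ((mem_FirstPos F).1 hp q hgt)

lemma zero_mem_FirstPos : ((0 : Fin 2), (0 : Fin (k+1))) ∈ FirstPos F := by
  rw [mem_FirstPos]
  intro q hq
  simp [ord] at hq

lemma card_image_eq : (Finset.univ.image F).card = (FirstPos F).card := by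
  have h1 : (FirstPos F).image F = Finset.univ.image F := by
    apply Finset.Subset.antisymm
    · exact Finset.image_subset_image (Finset.subset_univ _)
    · intro y hy
      simp only [Finset.mem_image] at hy ⊢
      obtain ⟨p, -, hp⟩ := hy
      obtain ⟨q, hq, hmin⟩ := Finset.exists_min_image
        (Finset.univ.filter (fun r => F r = y)) (ord k)
        ⟨p, by simp [hp]⟩
      simp only [Finset.mem_filter] at hq
      refine ⟨q, ?_, hq.2⟩
      rw [mem_FirstPos]
      intro r hr hFr
      have := hmin r (by simp [hFr, hq.2])
      omega
  have h2 : Set.InjOn F (FirstPos F) := fun p hp q hq h =>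
    firstPos_unique F (by simpa using hp) (by simpa using hq) h
  rw [← h1, Finset.card_image_of_injOn h2]


def cls (e : Fin n × Fin n) : Finset (Fin 2 × Fin k) :=
  Finset.univ.filter (fun x => edge F x = e)

lemma card_slots : (Finset.univ : Finset (Fin 2 × Fin k)).card = 2 * k := by
  simp [Finset.card_univ]

lemma biUnion_cls_card (Eset : Finset (Fin n × Fin n)) :
    (Eset.biUnion (cls F)).card = ∑ e ∈ Eset, (cls F e).card := by
  apply Finset.card_biUnion
  intro e he e' he' hne
  simp only [Finset.disjoint_left, cls, Finset.mem_filter]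
  rintro x ⟨-, h1⟩ ⟨-, h2⟩
  exact hne (h1 ▸ h2)

lemma count_bound (Eset : Finset (Fin n × Fin n))
    (h2 : ∀ e ∈ Eset, 2 ≤ (cls F e).card) : 2 * Eset.card ≤ 2 * k := by
  calc 2 * Eset.card = ∑ _e ∈ Eset, 2 := by simp [mul_comm]
    _ ≤ ∑ e ∈ Eset, (cls F e).card := Finset.sum_le_sum h2
    _ = (Eset.biUnion (cls F)).card := (biUnion_cls_card F Eset).symm
    _ ≤ (Finset.univ : Finset (Fin 2 × Fin k)).card :=
        Finset.card_le_card (Finset.subset_univ _)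
    _ = 2 * k := card_slots

/-- there is another slot with the same edge -/
lemma exists_other (hmult : ∀ e₀ : Fin 2 × Fin k, 2 ≤ (cls F (edge F e₀)).card)
    (s : Fin 2 × Fin k) : ∃ x, edge F x = edge F s ∧ x ≠ s := by
  have h := hmult s
  have hs : s ∈ cls F (edge F s) := by simp [cls]
  obtain ⟨a, ha, b, hb, hab⟩ := Finset.one_lt_card.1 (show 1 < (cls F (edge F s)).card by omega)
  simp only [cls, Finset.mem_filter] at ha hb
  by_cases h1 : a = s
  · exact ⟨b, hb.2, by rw [← h1]; exact fun h => hab h.symm⟩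
  · exact ⟨a, ha.2, h1⟩

/-- Fresh slots inclusions: every first position is a start or a fresh target. -/
lemma firstPos_subset :
    FirstPos F ⊆ insert ((0:Fin 2), (0:Fin (k+1)))
      (insert ((1:Fin 2), (0:Fin (k+1))) ((Fr F).image pos)) := by
  intro p hp
  obtain ⟨a, c⟩ := p
  simp only [Finset.mem_insert, Finset.mem_image]
  by_cases hc : c.val = 0
  · have hc' : c = 0 := Fin.ext hc
    subst hc'
    have : a = 0 ∨ a = 1 := by omega
    rcases this with h | h <;> subst h <;> simp
  · right; right
    refine ⟨(a, ⟨c.val - 1, by omega⟩), ?_, ?_⟩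
    · simp only [Fr, Finset.mem_filter, Finset.mem_univ, true_and]
      have : pos (a, (⟨c.val - 1, by omega⟩ : Fin k)) = (a, c) := by
        simp [pos, Prod.ext_iff, Fin.ext_iff]
        omega
      rw [this]; exact hp
    · simp [pos, Prod.ext_iff, Fin.ext_iff]; omega

lemma edge_injOn_Fr : Set.InjOn (edge F) (Fr F) := by
  intro s hs t ht h
  simp only [Finset.coe_filter, Fr, Set.mem_setOf_eq] at hs ht
  have h2 : F (pos s) = F (pos t) := congrArg Prod.snd h
  exact pos_inj (firstPos_unique F hs.2 ht.2 h2)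


lemma not_fresh_into {p : Fin 2 × Fin (k+1)} (hp : p ∈ FirstPos F) (hp2 : p.2 = 0)
    {t : Fin 2 × Fin k} (ht : F (pos t) = F p) :
    ∀ s ∈ Fr F, edge F s ≠ edge F t := by
  intro s hs heq
  have h2 : F (pos s) = F p := by
    have := congrArg Prod.snd heq
    simp only [edge] at this
    rw [this, ht]
  simp only [Fr, Finset.mem_filter] at hs
  have := firstPos_unique F hs.2 hp h2
  have h3 : (pos s).2 = s.2.succ := rfl
  rw [this, hp2] at h3
  exact (Fin.succ_ne_zero s.2) h3.symm

lemma exists_incoming (hk : 1 ≤ k)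
    (hmult : ∀ e₀ : Fin 2 × Fin k, 2 ≤ (cls F (edge F e₀)).card)
    (a : Fin 2)
    (hstart : ∀ b : Fin 2, F (b, (0:Fin (k+1))) = F (a, (0:Fin (k+1))) → b = a) :
    ∃ t : Fin 2 × Fin k, F (pos t) = F (a, (0:Fin (k+1))) := by
  set s₁ : Fin 2 × Fin k := (a, ⟨0, hk⟩) with hs₁
  obtain ⟨x, hx, hxne⟩ := exists_other F hmult s₁
  have hsrc : F (spos x) = F (a, (0:Fin (k+1))) := by
    have := congrArg Prod.fst hx
    simp only [edge] at this
    rw [this]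
    congr 1
  have hne : spos x ≠ (a, (0:Fin (k+1))) := by
    intro h
    apply hxne
    apply spos_inj (t := s₁)
    rw [h]; rfl
  obtain ⟨b, c⟩ := x
  by_cases hc : c.val = 0
  · exfalso
    have hsp : spos (b, c) = (b, (0:Fin (k+1))) := by
      simp [spos, Prod.ext_iff, Fin.ext_iff, hc]
    rw [hsp] at hsrc hne
    have := hstart b hsrc
    exact hne (by rw [this])
  · refine ⟨(b, ⟨c.val - 1, by omega⟩), ?_⟩
    have hpp : pos (b, (⟨c.val - 1, by omega⟩ : Fin k)) = spos (b, c) := by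
      simp [pos, spos, Prod.ext_iff, Fin.ext_iff]
      omega
    rw [hpp]; exact hsrc

end Stmt10

set_option maxHeartbeats 1000000 in
open Stmt10 in
/-- Let `F : {1,2} × {0,…,k} → [n]` encode a union of two directed
walks of length `k` on `[n]`, with edges `(F(a,b), F(a,b+1))` for `b < k`.  If every edge
occurs at least twice (with multiplicity), then the image of `F` has at most `k+1`
vertices, with equality only when the two walks coincide and visit `k+1` pairwise
distinct vertices. -/
theorem stmt_10 (k n : ℕ) (hk : 1 ≤ k) (F : Fin 2 × Fin (k + 1) → Fin n)
    (hmult : ∀ e₀ : Fin 2 × Fin k,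
      2 ≤ (Finset.univ.filter (fun e : Fin 2 × Fin k =>
            (F (e.1, e.2.castSucc), F (e.1, e.2.succ)) =
              (F (e₀.1, e₀.2.castSucc), F (e₀.1, e₀.2.succ)))).card) :
    (Finset.univ.image F).card ≤ k + 1 ∧
    ((Finset.univ.image F).card = k + 1 →
      (∀ b : Fin (k + 1), F (0, b) = F (1, b)) ∧
      Function.Injective (fun b : Fin (k + 1) => F (0, b))) := by
  have hm' : ∀ s : Fin 2 × Fin k, 2 ≤ (cls F (edge F s)).card := by
    intro s
    simpa [cls, edge, spos, pos] using hmult s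
  rw [card_image_eq F]
  by_cases h10 : ((1:Fin 2), (0:Fin (k+1))) ∈ FirstPos F
  · -- second walk starts at a brand new vertex: strict bound
    have hF01 : F ((0:Fin 2), (0:Fin (k+1))) ≠ F ((1:Fin 2), (0:Fin (k+1))) := by
      apply (mem_FirstPos F).1 h10
      simp [ord]
    have hstart1 : ∀ b : Fin 2, F (b, (0:Fin (k+1))) = F ((1:Fin 2), (0:Fin (k+1))) →
        b = 1 := by
      intro b hb
      fin_cases b
      · exact absurd hb hF01
      · rfl
    have hstart0 : ∀ b : Fin 2, F (b, (0:Fin (k+1))) = F ((0:Fin 2), (0:Fin (k+1))) →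
        b = 0 := by
      intro b hb
      fin_cases b
      · rfl
      · exact absurd hb.symm hF01
    obtain ⟨t, ht⟩ := exists_incoming F hk hm' 1 hstart1
    obtain ⟨t₀, ht₀⟩ := exists_incoming F hk hm' 0 hstart0
    have hnf_t := not_fresh_into F h10 rfl ht
    have hnf_t0 := not_fresh_into F (zero_mem_FirstPos F) rfl ht₀
    have hne : edge F t₀ ≠ edge F t := by
      intro h
      have h2 := congrArg Prod.snd h
      simp only [edge] at h2
      rw [ht₀, ht] at h2
      exact hF01 h2
    set Eset := insert (edge F t₀) (insert (edge F t) ((Fr F).image (edge F))) with hE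
    have htn : edge F t ∉ (Fr F).image (edge F) := by
      simp only [Finset.mem_image, not_exists]
      rintro s
      rintro ⟨hs, h⟩
      exact hnf_t s hs h
    have ht0n : edge F t₀ ∉ insert (edge F t) ((Fr F).image (edge F)) := by
      simp only [Finset.mem_insert, Finset.mem_image, not_or, not_exists]
      exact ⟨hne, fun s => by rintro ⟨hs, h⟩; exact hnf_t0 s hs h⟩
    have hcard : Eset.card = (Fr F).card + 2 := by
      rw [hE, Finset.card_insert_of_notMem ht0n, Finset.card_insert_of_notMem htn,
        Finset.card_image_of_injOn (edge_injOn_Fr F)]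
    have h2 : ∀ e ∈ Eset, 2 ≤ (cls F e).card := by
      intro e he
      rw [hE] at he
      simp only [Finset.mem_insert, Finset.mem_image] at he
      rcases he with rfl | rfl | ⟨s, -, rfl⟩
      · exact hm' t₀
      · exact hm' t
      · exact hm' s
    have hcb := count_bound F Eset h2
    rw [hcard] at hcb
    have hN : (FirstPos F).card ≤ 2 + (Fr F).card := by
      calc (FirstPos F).card ≤ (insert ((0:Fin 2), (0:Fin (k+1)))
            (insert ((1:Fin 2), (0:Fin (k+1))) ((Fr F).image pos))).card :=
            Finset.card_le_card (firstPos_subset F)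
        _ ≤ (insert ((1:Fin 2), (0:Fin (k+1))) ((Fr F).image pos)).card + 1 :=
            Finset.card_insert_le _ _
        _ ≤ ((Fr F).image pos).card + 1 + 1 := by
            have := Finset.card_insert_le ((1:Fin 2), (0:Fin (k+1))) ((Fr F).image pos)
            omega
        _ ≤ 2 + (Fr F).card := by
            have := Finset.card_image_le (s := Fr F) (f := pos)
            omega
    constructor
    · omega
    · intro h
      omega
  · -- main case: the start of walk 1 is not new
    have hsub : FirstPos F ⊆ insert ((0:Fin 2), (0:Fin (k+1))) ((Fr F).image pos) := by
      intro p hp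
      have h := firstPos_subset F hp
      simp only [Finset.mem_insert] at h ⊢
      rcases h with h | h | h
      · exact Or.inl h
      · exact absurd (h ▸ hp) h10
      · exact Or.inr h
    have h2 : ∀ e ∈ (Fr F).image (edge F), 2 ≤ (cls F e).card := by
      intro e he
      simp only [Finset.mem_image] at he
      obtain ⟨s, -, rfl⟩ := he
      exact hm' s
    have hcb := count_bound F _ h2
    rw [Finset.card_image_of_injOn (edge_injOn_Fr F)] at hcb
    have hN : (FirstPos F).card ≤ 1 + (Fr F).card := by
      calc (FirstPos F).card ≤ (insert ((0:Fin 2), (0:Fin (k+1)))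
            ((Fr F).image pos)).card := Finset.card_le_card hsub
        _ ≤ ((Fr F).image pos).card + 1 := Finset.card_insert_le _ _
        _ ≤ 1 + (Fr F).card := by
            have := Finset.card_image_le (s := Fr F) (f := pos)
            omega
    refine ⟨by omega, ?_⟩

    intro hEq
    -- now Fr has exactly k elements, every edge class has a fresh representative
    have hfk : (Fr F).card = k := by omega
    have hbiU : ((Fr F).image (edge F)).biUnion (cls F) = Finset.univ := by
      apply Finset.eq_of_subset_of_card_le (Finset.subset_univ _)
      rw [card_slots, biUnion_cls_card]
      calc 2*k = ∑ _e ∈ (Fr F).image (edge F), 2 := by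
            rw [Finset.sum_const, Finset.card_image_of_injOn (edge_injOn_Fr F), hfk,
              smul_eq_mul, mul_comm]
        _ ≤ ∑ e ∈ (Fr F).image (edge F), (cls F e).card := Finset.sum_le_sum h2
    have hcover : ∀ z : Fin 2 × Fin k, ∃ s ∈ Fr F, edge F s = edge F z := by
      intro z
      have hz : z ∈ ((Fr F).image (edge F)).biUnion (cls F) := by
        rw [hbiU]; exact Finset.mem_univ z
      obtain ⟨e, he, hze⟩ := Finset.mem_biUnion.1 hz
      obtain ⟨s, hs, rfl⟩ := Finset.mem_image.1 he
      exact ⟨s, hs, ((Finset.mem_filter.1 hze).2).symm⟩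
    have hsum : ∑ e ∈ (Fr F).image (edge F), (cls F e).card = 2*k := by
      rw [← biUnion_cls_card, hbiU, card_slots]
    have hcls2 : ∀ z : Fin 2 × Fin k, (cls F (edge F z)).card = 2 := by
      intro z
      obtain ⟨s, hs, hse⟩ := hcover z
      rw [← hse]
      by_contra hne2
      have h3 : 3 ≤ (cls F (edge F s)).card := by have := hm' s; omega
      have hmem : edge F s ∈ (Fr F).image (edge F) := Finset.mem_image_of_mem _ hs
      have hrest : 2 * (((Fr F).image (edge F)).erase (edge F s)).card ≤
          ∑ e ∈ ((Fr F).image (edge F)).erase (edge F s), (cls F e).card := by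
        calc 2 * (((Fr F).image (edge F)).erase (edge F s)).card
            = ∑ _e ∈ ((Fr F).image (edge F)).erase (edge F s), 2 := by
              rw [Finset.sum_const, smul_eq_mul, mul_comm]
          _ ≤ _ := Finset.sum_le_sum (fun e he => h2 e (Finset.mem_of_mem_erase he))
      have hsplit := Finset.sum_erase_add ((Fr F).image (edge F))
        (fun e => (cls F e).card) hmem
      rw [Finset.card_erase_of_mem hmem,
        Finset.card_image_of_injOn (edge_injOn_Fr F), hfk] at hrest
      omega
    have hpair : ∀ (x x' z : Fin 2 × Fin k), edge F x' = edge F x → x' ≠ x →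
        edge F z = edge F x → z = x ∨ z = x' := by
      intro x x' z h1 hne2 h3
      by_contra hcon
      push_neg at hcon
      have hsub2 : ({x, x', z} : Finset (Fin 2 × Fin k)) ⊆ cls F (edge F x) := by
        intro w hw
        simp only [Finset.mem_insert, Finset.mem_singleton] at hw
        rcases hw with rfl | rfl | rfl <;> simp [cls, h1, h3]
      have hc3 : ({x, x', z} : Finset (Fin 2 × Fin k)).card = 3 := by
        rw [Finset.card_insert_of_notMem, Finset.card_insert_of_notMem,
          Finset.card_singleton]
        · simp only [Finset.mem_singleton]
          exact hcon.2.symm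
        · simp only [Finset.mem_insert, Finset.mem_singleton, not_or]
          exact ⟨hne2.symm, hcon.1.symm⟩
      have hle := Finset.card_le_card hsub2
      rw [hcls2 x, hc3] at hle
      omega
    have main : ∀ m : ℕ, ∀ hm : m < k + 1,
        F ((0:Fin 2), (⟨m, hm⟩ : Fin (k+1))) = F ((1:Fin 2), ⟨m, hm⟩) ∧
        ∀ q : Fin 2 × Fin (k+1), F q = F ((0:Fin 2), (⟨m, hm⟩ : Fin (k+1))) →
          q = ((0:Fin 2), (⟨m, hm⟩ : Fin (k+1))) ∨ q = ((1:Fin 2), ⟨m, hm⟩) := by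
      intro m
      induction m using Nat.strong_induction_on with
      | _ m IH =>
      intro hm
      rcases m with _ | d
      · -- base case
        have e0 : (⟨0, hm⟩ : Fin (k+1)) = 0 := by
          apply Fin.ext; simp
        rw [e0]
        have claim1 : ∀ q : Fin 2 × Fin (k+1), F q = F ((0:Fin 2), (0:Fin (k+1))) →
            q = ((0:Fin 2), (0:Fin (k+1))) ∨ q = ((1:Fin 2), (0:Fin (k+1))) := by
          rintro ⟨a, c⟩ hq
          by_cases hc : c.val = 0
          · have hc' : c = 0 := Fin.ext (by simpa using hc)
            subst hc'
            fin_cases a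
            · exact Or.inl rfl
            · exact Or.inr rfl
          · exfalso
            set z : Fin 2 × Fin k := (a, ⟨c.val - 1, by omega⟩) with hz
            obtain ⟨s, hs, hse⟩ := hcover z
            have hpz : pos z = (a, c) := by
              simp [pos, hz, Prod.ext_iff, Fin.ext_iff]; omega
            have hfs : F (pos s) = F ((0:Fin 2), (0:Fin (k+1))) := by
              have h5 := congrArg Prod.snd hse
              simp only [edge] at h5
              rw [h5, hpz, hq]
            have hfp : pos s ∈ FirstPos F := (Finset.mem_filter.1 hs).2
            have heqp := firstPos_unique F hfp (zero_mem_FirstPos F) hfs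
            have h3 : (pos s).2 = s.2.succ := rfl
            rw [heqp] at h3
            exact (Fin.succ_ne_zero s.2) h3.symm
        refine ⟨?_, claim1⟩
        obtain ⟨x', hx'e, hx'ne⟩ := exists_other F hm' ((0:Fin 2), (⟨0, hk⟩ : Fin k))
        have hsp0 : spos ((0:Fin 2), (⟨0, hk⟩ : Fin k)) = ((0:Fin 2), (0:Fin (k+1))) := by
          simp [spos, Prod.ext_iff, Fin.ext_iff]
        have hsrc : F (spos x') = F ((0:Fin 2), (0:Fin (k+1))) := by
          have h5 := congrArg Prod.fst hx'e
          simp only [edge] at h5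
          rw [h5, hsp0]
        rcases claim1 _ hsrc with h | h
        · exact absurd (spos_inj (h.trans hsp0.symm)) hx'ne
        · rw [h] at hsrc
          exact hsrc.symm
      · -- inductive step
        have hdk : d < k := by omega
        have hd1 : d < k + 1 := by omega
        obtain ⟨IH1, IH2⟩ := IH d (by omega) hd1
        set sd : Fin 2 × Fin k := ((0:Fin 2), ⟨d, hdk⟩) with hsd
        have hsposd : spos sd = ((0:Fin 2), (⟨d, hd1⟩ : Fin (k+1))) := by
          simp [spos, hsd, Prod.ext_iff, Fin.ext_iff]
        have hposd : pos sd = ((0:Fin 2), (⟨d+1, hm⟩ : Fin (k+1))) := by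
          simp [pos, hsd, Prod.ext_iff, Fin.ext_iff]
        obtain ⟨x', hx'e, hx'ne⟩ := exists_other F hm' sd
        have hsrc : F (spos x') = F ((0:Fin 2), (⟨d, hd1⟩ : Fin (k+1))) := by
          have h5 := congrArg Prod.fst hx'e
          simp only [edge] at h5
          rw [h5, hsposd]
        rcases IH2 _ hsrc with h | h
        · exact absurd (spos_inj (h.trans hsposd.symm)) hx'ne
        · have hposx' : pos x' = ((1:Fin 2), (⟨d+1, hm⟩ : Fin (k+1))) := by
            obtain ⟨b, c⟩ := x'
            simp only [spos, Prod.ext_iff] at h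
            simp only [pos, Prod.ext_iff, Fin.ext_iff]
            refine ⟨by rw [h.1], ?_⟩
            have := congrArg Fin.val h.2
            simp only [Fin.coe_castSucc] at this
            simp [this]
          have hQ1 : F ((0:Fin 2), (⟨d+1, hm⟩ : Fin (k+1))) = F ((1:Fin 2), ⟨d+1, hm⟩) := by
            have h5 := congrArg Prod.snd hx'e
            simp only [edge] at h5
            rw [hposx', hposd] at h5
            exact h5.symm
          refine ⟨hQ1, ?_⟩
          rintro ⟨a, c⟩ hq
          by_cases hc : c.val = 0
          · exfalso
            obtain ⟨B1, B2⟩ := IH 0 (by omega) (by omega)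
            have hc0 : c = (⟨0, by omega⟩ : Fin (k+1)) := Fin.ext hc
            rw [hc0] at hq
            rcases (show a = (0:Fin 2) ∨ a = (1:Fin 2) from by
              rcases (show a.val = 0 ∨ a.val = 1 from by omega) with h7 | h7
              exacts [Or.inl (Fin.ext h7), Or.inr (Fin.ext h7)]) with rfl | rfl
            · rcases B2 _ hq.symm with h6 | h6 <;>
                · simp only [Prod.ext_iff, Fin.ext_iff] at h6
                  omega
            · rcases B2 _ (B1.trans hq).symm with h6 | h6 <;>
                · simp only [Prod.ext_iff, Fin.ext_iff] at h6
                  omega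
          · set z : Fin 2 × Fin k := (a, ⟨c.val - 1, by omega⟩) with hz
            have hpz : pos z = (a, c) := by
              simp [pos, hz, Prod.ext_iff, Fin.ext_iff]; omega
            obtain ⟨s, hsFr, hse⟩ := hcover z
            have hps : F (pos s) = F ((0:Fin 2), (⟨d+1, hm⟩ : Fin (k+1))) := by
              have h5 := congrArg Prod.snd hse
              simp only [edge] at h5
              rw [h5, hpz, hq]
            have hfp : pos s ∈ FirstPos F := (Finset.mem_filter.1 hsFr).2
            have hδpos : 1 ≤ (pos s).2.val := by
              simp [pos]
            have hα0 : (pos s).1.val = 0 := by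
              by_contra hα1
              have h1 : (pos s).1.val = 1 := by have := (pos s).1.isLt; omega
              have hord : ord k ((0:Fin 2), (⟨d+1, hm⟩ : Fin (k+1))) < ord k (pos s) := by
                simp only [ord, h1, Fin.val_zero]
                have := (pos s).2.isLt
                omega
              exact (mem_FirstPos F).1 hfp _ hord hps.symm
            have hpos_eq : pos s = ((0:Fin 2), (⟨d+1, hm⟩ : Fin (k+1))) := by
              rcases Nat.lt_trichotomy (pos s).2.val (d+1) with hlt | heq2 | hgt
              · exfalso
                obtain ⟨C1, C2⟩ := IH (pos s).2.val (by omega) (by omega)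
                have hrw : ((0:Fin 2), (⟨(pos s).2.val, by omega⟩ : Fin (k+1))) = pos s := by
                  simp only [Prod.ext_iff, Fin.ext_iff]
                  exact ⟨hα0.symm, trivial⟩
                have hq3 : F ((0:Fin 2), (⟨d+1, hm⟩ : Fin (k+1))) =
                    F ((0:Fin 2), (⟨(pos s).2.val, by omega⟩ : Fin (k+1))) := by
                  rw [hrw, hps]
                rcases C2 _ hq3 with h6 | h6 <;>
                  · simp only [Prod.ext_iff, Fin.ext_iff] at h6
                    omega
              · simp only [Prod.ext_iff, Fin.ext_iff]
                exact ⟨hα0, heq2⟩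
              · exfalso
                have hord : ord k ((0:Fin 2), (⟨d+1, hm⟩ : Fin (k+1))) < ord k (pos s) := by
                  simp only [ord, hα0, Fin.val_zero]
                  omega
                exact (mem_FirstPos F).1 hfp _ hord hps.symm
            have hssd : s = sd := pos_inj (hpos_eq.trans hposd.symm)
            have hzz : edge F z = edge F sd := by rw [← hssd]; exact hse.symm
            rcases hpair sd x' z hx'e hx'ne hzz with h1 | h1
            · left; rw [← hpz, h1, hposd]
            · right; rw [← hpz, h1, hposx']
    constructor
    · intro b
      have := (main b.val b.isLt).1
      simpa [Fin.eta] using this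
    · intro i j hij
      simp only at hij
      have := (main j.val j.isLt).2 ((0:Fin 2), i) (by simpa [Fin.eta] using hij)
      rcases this with h | h <;> simp only [Prod.ext_iff, Fin.ext_iff] at h
      · exact Fin.ext h.2
      · exact absurd h.1 (by simp)
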